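/- arXiv:1109.1602 — 3 statements merged into one kernel-verified Lean document; each statement's English description precedes it below -/
import Mathlib

section
/- For every graph G on n vertices, the treewidth of G plus the treewidth of the complement of G is at least n - 2. -/
open SimpleGraph

/-- A tree decomposition of a graph `G`. -/
structure TreeDecomp {V : Type} (G : SimpleGraph V) where
  ι : Type
  T : SimpleGraph ι
  conn : T.Connected
  acyclic : T.IsAcyclic
  bag : ι → Finset V
  cover : ∀ v : V, ∃ i, v ∈ bag i
  edge_cover : ∀ ⦃u v : V⦄, G.Adj u v → ∃ i, u ∈ bag i ∧ v ∈ bag i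
  bag_conn : ∀ v : V, (T.induce {i | v ∈ bag i}).Connected

/-- The treewidth of `G`: minimum over tree decompositions of max bag size minus one. -/
noncomputable def treewidth {V : Type} (G : SimpleGraph V) : ℕ :=
  sInf {k | ∃ D : TreeDecomp G, ∀ i, (D.bag i).card ≤ k + 1}

/-- `G` is a `k`-tree: there is a construction ordering starting from a `(k+1)`-clique,
each later vertex being adjacent exactly to a `k`-clique of earlier vertices. -/
def IsKTree {V : Type} (k : ℕ) (G : SimpleGraph V) : Prop :=
  ∃ (n : ℕ) (e : V ≃ Fin n), k + 1 ≤ n ∧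
    (∀ i j : Fin n, i < j → (j : ℕ) < k + 1 → G.Adj (e.symm i) (e.symm j)) ∧
    ∀ j : Fin n, k + 1 ≤ (j : ℕ) →
      ∃ C : Finset V, G.IsNClique k C ∧ (∀ x ∈ C, ((e x : ℕ) < (j : ℕ))) ∧
        ∀ i : Fin n, i < j → (G.Adj (e.symm i) (e.symm j) ↔ e.symm i ∈ C)

/-- `G` has four vertices inducing a 4-cycle. -/
def HasInducedC4 {V : Type} (G : SimpleGraph V) : Prop :=
  ∃ a b c d : V, a ≠ c ∧ b ≠ d ∧
    G.Adj a b ∧ G.Adj b c ∧ G.Adj c d ∧ G.Adj d a ∧ ¬ G.Adj a c ∧ ¬ G.Adj b d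

/-- Two vertex sets touch in `G`: they intersect or an edge of `G` joins them. -/
def Touch {V : Type} (G : SimpleGraph V) (A B : Set V) : Prop :=
  (A ∩ B).Nonempty ∨ ∃ a ∈ A, ∃ b ∈ B, G.Adj a b

/-- A bramble in `G`: a family of connected, pairwise touching vertex sets. -/
def IsBramble {V : Type} (G : SimpleGraph V) (𝓑 : Set (Set V)) : Prop :=
  (∀ A ∈ 𝓑, (G.induce A).Connected) ∧ ∀ A ∈ 𝓑, ∀ B ∈ 𝓑, Touch G A B

/-- `S` is a hitting set of the bramble `𝓑`. -/
def IsHittingSet {V : Type} (𝓑 : Set (Set V)) (S : Set V) : Prop :=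
  ∀ A ∈ 𝓑, (A ∩ S).Nonempty

/-- The split graph `Q_n^k`: a `k`-clique (the vertices `< k`) with `n - k` further
vertices adjacent exactly to the clique. -/
def QGraph (n k : ℕ) : SimpleGraph (Fin n) where
  Adj i j := i ≠ j ∧ ((i : ℕ) < k ∨ (j : ℕ) < k)
  symm := by constructor; intro i j h; exact ⟨h.1.symm, h.2.symm⟩
  loopless := by constructor; intro i h; exact h.1 rfl

/-!
Take an optimal tree decomposition of `G`, restricted to a finite subtree, and one of `Gᶜ`.
Any two vertices share a bag in one of them, so the subtrees of nodes whose bags contain a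
given vertex meet pairwise in one tree or in the other. The Helly property of subtrees, together
with a pointer argument on the finite tree, then yields nodes `i` and `j` such that every vertex
lies in the bag at `i` or in the bag at `j`; hence `n ≤ (tw G + 1) + (tw Gᶜ + 1)`.
-/

namespace SimpleGraph

variable {ι : Type*} {T : SimpleGraph ι} {s t : Set ι} {a b : ι}

lemma preconnected_induce_iff_exists_walk :
    (T.induce s).Preconnected ↔
      ∀ ⦃x⦄, x ∈ s → ∀ ⦃y⦄, y ∈ s → ∃ w : T.Walk x y, ∀ z ∈ w.support, z ∈ s := by
  refine ⟨fun h x hx y hy => ?_, fun h x y => ?_⟩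
  · obtain ⟨w⟩ := h ⟨x, hx⟩ ⟨y, hy⟩
    refine ⟨w.map (Embedding.induce s).toHom, fun z hz => ?_⟩
    obtain ⟨z, -, rfl⟩ := List.mem_map.1 (w.support_map _ ▸ hz)
    exact z.2
  · obtain ⟨w, hw⟩ := h x.2 y.2
    exact ⟨w.induce s hw⟩

lemma Preconnected.induce_induce (h : (T.induce (s ∩ t)).Preconnected) :
    ((T.induce t).induce {x : t | ↑x ∈ s}).Preconnected := by
  let φ : T.induce (s ∩ t) →g (T.induce t).induce {x : t | ↑x ∈ s} :=
    ⟨fun x => ⟨⟨x, x.2.2⟩, x.2.1⟩, id⟩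
  intro x y
  exact (h ⟨x, x.2, x.1.2⟩ ⟨y, y.2, y.1.2⟩).map φ

lemma IsAcyclic.preconnected_induce_inter (hT : T.IsAcyclic) (hs : (T.induce s).Preconnected)
    (ht : (T.induce t).Preconnected) : (T.induce (s ∩ t)).Preconnected := by
  classical
  rw [preconnected_induce_iff_exists_walk] at *
  intro x hx y hy
  obtain ⟨p, hp⟩ := hs hx.1 hy.1
  obtain ⟨q, hq⟩ := ht hx.2 hy.2
  have hpq : (p.toPath : T.Walk x y) = q.toPath :=
    congrArg Subtype.val ((hT.subsingleton_path x y).elim _ _)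
  refine ⟨p.toPath, fun z hz => ⟨hp z (p.support_toPath_subset_support hz), ?_⟩⟩
  exact hq z (q.support_toPath_subset_support (hpq ▸ hz))

def edgeSide (T : SimpleGraph ι) (a b : ι) : Set ι :=
  {v | (T.deleteEdges {s(a, b)}).Reachable a v}

lemma self_mem_edgeSide : a ∈ T.edgeSide a b := Reachable.refl _

lemma IsAcyclic.disjoint_edgeSide (hT : T.IsAcyclic) (hab : T.Adj a b) :
    Disjoint (T.edgeSide a b) (T.edgeSide b a) := by
  refine Set.disjoint_left.2 fun v hva hvb => ?_
  rw [edgeSide, Set.mem_ofPred_eq, Sym2.eq_swap] at hvb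
  exact isBridge_iff.1 (isAcyclic_iff_forall_adj_isBridge.1 hT hab) (hva.trans hvb.symm)

lemma Connected.mem_edgeSide_or (hT : T.Connected) (hab : T.Adj a b) (v : ι) :
    v ∈ T.edgeSide a b ∨ v ∈ T.edgeSide b a := by
  classical
  obtain ⟨p, hp⟩ := hT.exists_isPath v a
  by_cases hab_p : s(a, b) ∈ p.edges
  · -- the part of the path before `b` avoids `a`, hence the edge `ab`
    have hb := p.snd_mem_support_of_mem_edges hab_p
    have ha := Walk.endpoint_notMem_support_takeUntil hp hb hab.ne
    right
    rw [edgeSide, Set.mem_ofPred_eq, Sym2.eq_swap, reachable_comm]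
    exact reachable_deleteEdges_iff_exists_walk.2
      ⟨p.takeUntil b hb, fun h => ha (Walk.fst_mem_support_of_mem_edges _ h)⟩
  · exact Or.inl (reachable_deleteEdges_iff_exists_walk.2 ⟨p, hab_p⟩).symm

lemma subset_edgeSide (hs : (T.induce s).Preconnected) (hb : b ∉ s) {m : ι} (hm : m ∈ s)
    (hma : m ∈ T.edgeSide a b) : s ⊆ T.edgeSide a b := by
  rw [preconnected_induce_iff_exists_walk] at hs
  intro c hc
  obtain ⟨w, hw⟩ := hs hm hc
  exact hma.trans (reachable_deleteEdges_iff_exists_walk.2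
    ⟨w, fun h => hb (hw b (w.snd_mem_support_of_mem_edges h))⟩)

lemma IsAcyclic.mem_and_mem_of_meets_edgeSides (hT : T.IsAcyclic) (hab : T.Adj a b)
    (hs : (T.induce s).Preconnected) (hsa : (s ∩ T.edgeSide a b).Nonempty)
    (hsb : (s ∩ T.edgeSide b a).Nonempty) : a ∈ s ∧ b ∈ s := by
  obtain ⟨x, hxs, hx⟩ := hsa
  obtain ⟨y, hys, hy⟩ := hsb
  have hdisj := hT.disjoint_edgeSide hab
  exact ⟨by_contra fun ha => Set.disjoint_left.1 hdisj hx (subset_edgeSide hs ha hys hy hxs),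
    by_contra fun hb => Set.disjoint_left.1 hdisj (subset_edgeSide hs hb hxs hx hys) hy⟩

lemma Connected.exists_adj_subset_edgeSide (hT : T.Connected) (hs : (T.induce s).Preconnected)
    (hs_ne : s.Nonempty) {i : ι} (hi : i ∉ s) : ∃ j, T.Adj i j ∧ s ⊆ T.edgeSide j i := by
  classical
  obtain ⟨m, hm⟩ := hs_ne
  obtain ⟨p, hp⟩ := hT.exists_isPath i m
  obtain ⟨j, hij, q, rfl⟩ := Walk.exists_eq_cons_of_ne (ne_of_mem_of_not_mem hm hi).symm p
  rw [Walk.cons_isPath_iff] at hp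
  exact ⟨j, hij, subset_edgeSide hs hi hm (reachable_deleteEdges_iff_exists_walk.2
    ⟨q, fun h => hp.2 (q.snd_mem_support_of_mem_edges h)⟩)⟩

lemma Connected.exists_adj_separating (hT : T.Connected) (hs : (T.induce s).Preconnected)
    (ht : (T.induce t).Preconnected) (hst : Disjoint s t) (hs_ne : s.Nonempty)
    (ht_ne : t.Nonempty) : ∃ a b, T.Adj a b ∧ s ⊆ T.edgeSide a b ∧ t ⊆ T.edgeSide b a := by
  classical
  obtain ⟨r, hr⟩ := hs_ne
  obtain ⟨z, hz⟩ := ht_ne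
  obtain ⟨p, hp⟩ := hT.exists_isPath r z
  induction p with
  | nil => exact absurd hz (Set.disjoint_left.1 hst hr)
  | @cons r c z hrc q ih =>
    rw [Walk.cons_isPath_iff] at hp
    by_cases hc : c ∈ s
    · exact ih hc hz hp.1
    · refine ⟨r, c, hrc, subset_edgeSide hs hc hr self_mem_edgeSide,
        subset_edgeSide ht (Set.disjoint_left.1 hst hr) hz ?_⟩
      exact reachable_deleteEdges_iff_exists_walk.2
        ⟨q, fun h => hp.2 (q.snd_mem_support_of_mem_edges h)⟩

lemma IsTree.inter_inter_nonempty (hT : T.IsTree) {A B C : Set ι}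
    (hA : (T.induce A).Preconnected) (hB : (T.induce B).Preconnected)
    (hC : (T.induce C).Preconnected) (hAB : (A ∩ B).Nonempty) (hAC : (A ∩ C).Nonempty)
    (hBC : (B ∩ C).Nonempty) : (A ∩ B ∩ C).Nonempty := by
  have hTa := hT.isAcyclic
  by_contra hABC
  have hdisj : Disjoint (A ∩ B) (A ∩ C) :=
    Set.disjoint_left.2 fun x hx hx' => hABC ⟨x, hx, hx'.2⟩
  obtain ⟨a, b, hab, hAB_a, hAC_b⟩ := hT.connected.exists_adj_separating
    (hTa.preconnected_induce_inter hA hB) (hTa.preconnected_induce_inter hA hC) hdisj hAB hAC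
  have hsides := hTa.disjoint_edgeSide hab
  have meets_a : ∀ {S}, A ∩ B ⊆ S → (S ∩ T.edgeSide a b).Nonempty := fun h =>
    let ⟨x, hx⟩ := hAB; ⟨x, h hx, hAB_a hx⟩
  have meets_b : ∀ {S}, A ∩ C ⊆ S → (S ∩ T.edgeSide b a).Nonempty := fun h =>
    let ⟨x, hx⟩ := hAC; ⟨x, h hx, hAC_b hx⟩
  obtain ⟨haA, hbA⟩ := hTa.mem_and_mem_of_meets_edgeSides hab hA
    (meets_a Set.inter_subset_left) (meets_b Set.inter_subset_left)
  have haC : a ∉ C := fun h => Set.disjoint_left.1 hsides self_mem_edgeSide (hAC_b ⟨haA, h⟩)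
  have hbB : b ∉ B := fun h => Set.disjoint_right.1 hsides self_mem_edgeSide (hAB_a ⟨hbA, h⟩)
  obtain ⟨z, hzB, hzC⟩ := hBC
  rcases hT.connected.mem_edgeSide_or hab z with hz | hz
  · exact haC (hTa.mem_and_mem_of_meets_edgeSides hab hC ⟨z, hzC, hz⟩
      (meets_b Set.inter_subset_right)).1
  · exact hbB (hTa.mem_and_mem_of_meets_edgeSides hab hB (meets_a Set.inter_subset_right)
      ⟨z, hzB, hz⟩).2

lemma IsTree.exists_forall_mem_of_pairwise_inter_nonempty {α : Type*} (hT : T.IsTree)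
    (S : Finset α) (C : α → Set ι) (hC : ∀ x ∈ S, (T.induce (C x)).Preconnected)
    (hCC : ∀ x ∈ S, ∀ y ∈ S, (C x ∩ C y).Nonempty) : ∃ i, ∀ x ∈ S, i ∈ C x := by
  classical
  induction S using Finset.induction_on generalizing C with
  | empty => exact ⟨hT.connected.nonempty.some, by simp⟩
  | @insert a S _ ih =>
    have ha := Finset.mem_insert_self a S
    have hS_sub : ∀ {x}, x ∈ S → x ∈ insert a S := Finset.mem_insert_of_mem
    rcases S.eq_empty_or_nonempty with rfl | hS
    · obtain ⟨i, hi, -⟩ := hCC a ha a ha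
      exact ⟨i, by simpa using hi⟩
    obtain ⟨i, hi⟩ := ih (fun x => C x ∩ C a)
      (fun x hx => hT.isAcyclic.preconnected_induce_inter (hC x (hS_sub hx)) (hC a ha))
      (fun x hx y hy => by
        obtain ⟨m, ⟨hmx, hmy⟩, hma⟩ := hT.inter_inter_nonempty
          (hC x (hS_sub hx)) (hC y (hS_sub hy)) (hC a ha) (hCC x (hS_sub hx) y (hS_sub hy))
          (hCC x (hS_sub hx) a ha) (hCC y (hS_sub hy) a ha)
        exact ⟨m, ⟨hmx, hma⟩, hmy, hma⟩)
    obtain ⟨x, hx⟩ := hS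
    refine ⟨i, fun y hy => ?_⟩
    rcases Finset.mem_insert.1 hy with rfl | hy
    · exact (hi x hx).2
    · exact (hi y hy).1

lemma IsTree.inter_nonempty_of_meets_disjoint (hT : T.IsTree)
    {R S C D : Set ι} (hR : (T.induce R).Preconnected) (hS : (T.induce S).Preconnected)
    (hC : (T.induce C).Preconnected) (hD : (T.induce D).Preconnected) (hRS : Disjoint R S)
    (hRC : (R ∩ C).Nonempty) (hSC : (S ∩ C).Nonempty) (hRD : (R ∩ D).Nonempty)
    (hSD : (S ∩ D).Nonempty) : (C ∩ D).Nonempty := by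
  obtain ⟨a, b, hab, hRa, hSb⟩ := hT.connected.exists_adj_separating hR hS hRS
    (hRC.mono Set.inter_subset_left) (hSC.mono Set.inter_subset_left)
  have mem_a : ∀ {E}, (T.induce E).Preconnected → (R ∩ E).Nonempty → (S ∩ E).Nonempty → a ∈ E :=
    fun hE ⟨x, hxR, hxE⟩ ⟨y, hyS, hyE⟩ =>
      (hT.isAcyclic.mem_and_mem_of_meets_edgeSides hab hE ⟨x, hxE, hRa hxR⟩ ⟨y, hyE, hSb hyS⟩).1
  exact ⟨a, mem_a hC hRC hSC, mem_a hD hRD hSD⟩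

lemma IsTree.exists_apply_apply_eq_self [Finite ι] (hT : T.IsTree) (f : ι → ι)
    (hf : ∀ x, T.Adj x (f x)) : ∃ x, f (f x) = x := by
  classical
  have := Fintype.ofFinite ι
  have hcard := hT.card_edgeFinset
  obtain ⟨x, y, hxy, he⟩ := Fintype.exists_ne_map_eq_of_card_lt
    (fun x => (⟨s(x, f x), by simpa using hf x⟩ : T.edgeFinset)) (by rw [Fintype.card_coe]; omega)
  rw [Subtype.mk.injEq, Sym2.eq_iff] at he
  rcases he with ⟨rfl, -⟩ | ⟨rfl, hfy⟩
  · exact absurd rfl hxy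
  · exact ⟨y, hfy⟩

end SimpleGraph

theorem exists_forall_mem_or_mem_of_pairwise_inter_nonempty {ι κ α : Type*} [Finite ι]
    [Finite α] {T : SimpleGraph ι} {T' : SimpleGraph κ} (hT : T.IsTree) (hT' : T'.IsTree)
    (A : α → Set ι) (B : α → Set κ) (hA : ∀ x, (T.induce (A x)).Preconnected)
    (hB : ∀ x, (T'.induce (B x)).Preconnected)
    (hAB : ∀ x y, (A x ∩ A y).Nonempty ∨ (B x ∩ B y).Nonempty) :
    ∃ i j, ∀ x, i ∈ A x ∨ j ∈ B x := by
  classical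
  have := Fintype.ofFinite α
  by_cases hgood : ∃ i, ∀ x y, i ∉ A x → i ∉ A y → (B x ∩ B y).Nonempty
  · obtain ⟨i, hi⟩ := hgood
    obtain ⟨j, hj⟩ := hT'.exists_forall_mem_of_pairwise_inter_nonempty
      {x | i ∉ A x}.toFinset B (fun x _ => hB x)
      (fun x hx y hy => hi x y (by simpa using hx) (by simpa using hy))
    exact ⟨i, j, fun x => or_iff_not_imp_left.2 fun hx => hj x (by simpa using hx)⟩
  push Not at hgood
  -- Each node `i` has a pair `x i, y i` with disjoint `B`-sets, so their `A`-sets meet away from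
  -- `i`. Pointing every node towards that meeting set gives an edge pointing both ways; the two
  -- pairs at its ends have their `A`-sets on opposite sides, so their `B`-sets meet crosswise.
  choose x y hx hy hxy using hgood
  have hM : ∀ i, (A (x i) ∩ A (y i)).Nonempty := fun i =>
    (hAB _ _).resolve_right (by rw [hxy]; exact Set.not_nonempty_empty)
  choose f hf hf_side using fun i => hT.connected.exists_adj_subset_edgeSide
    (hT.isAcyclic.preconnected_induce_inter (hA _) (hA _)) (hM i) fun h => hx i h.1
  obtain ⟨i, hi⟩ := hT.exists_apply_apply_eq_self f hf
  have hA_side : ∀ k, A (x k) ⊆ T.edgeSide (f k) k ∧ A (y k) ⊆ T.edgeSide (f k) k := fun k =>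
    let ⟨m, hmx, hmy⟩ := hM k
    ⟨subset_edgeSide (hA _) (hx k) hmx (hf_side k ⟨hmx, hmy⟩),
      subset_edgeSide (hA _) (hy k) hmy (hf_side k ⟨hmx, hmy⟩)⟩
  have hsides := hT.isAcyclic.disjoint_edgeSide (hf i)
  have hB_meet : ∀ u w, A u ⊆ T.edgeSide (f i) i → A w ⊆ T.edgeSide i (f i) →
      (B u ∩ B w).Nonempty := fun u w hu hw =>
    (hAB u w).resolve_left fun ⟨z, hzu, hzw⟩ => Set.disjoint_left.1 hsides (hw hzw) (hu hzu)
  obtain ⟨hxi, hyi⟩ := hA_side i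
  obtain ⟨hxj, hyj⟩ := hA_side (f i)
  rw [hi] at hxj hyj
  refine absurd ?_ (Set.not_nonempty_iff_eq_empty.2 (hxy (f i)))
  exact hT'.inter_nonempty_of_meets_disjoint (hB _) (hB _) (hB _) (hB _)
    (Set.disjoint_iff_inter_eq_empty.2 (hxy i)) (hB_meet _ _ hxi hxj) (hB_meet _ _ hyi hxj)
    (hB_meet _ _ hxi hyj) (hB_meet _ _ hyi hyj)

namespace TreeDecomp

variable {V : Type} {G : SimpleGraph V}

def subtree (D : TreeDecomp G) (v : V) : Set D.ι := {i | v ∈ D.bag i}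

lemma isTree (D : TreeDecomp G) : D.T.IsTree := ⟨D.conn, D.acyclic⟩

lemma preconnected_subtree (D : TreeDecomp G) (v : V) :
    (D.T.induce (D.subtree v)).Preconnected :=
  (D.bag_conn v).preconnected

lemma subtree_inter_nonempty_or (D : TreeDecomp G) (D' : TreeDecomp Gᶜ) (u v : V) :
    (D.subtree u ∩ D.subtree v).Nonempty ∨ (D'.subtree u ∩ D'.subtree v).Nonempty := by
  by_cases huv : u = v
  · subst huv
    obtain ⟨i, hi⟩ := D.cover u
    exact Or.inl ⟨i, hi, hi⟩
  by_cases hG : G.Adj u v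
  · exact Or.inl (D.edge_cover hG)
  · exact Or.inr (D'.edge_cover ⟨huv, hG⟩)

def restrict (D : TreeDecomp G) (I : Set D.ι) (hI : (D.T.induce I).Connected)
    (hmeet : ∀ u v, (D.subtree u ∩ D.subtree v).Nonempty →
      (D.subtree u ∩ D.subtree v ∩ I).Nonempty) : TreeDecomp G where
  ι := I
  T := D.T.induce I
  conn := hI
  acyclic := D.acyclic.induce I
  bag i := D.bag i
  cover v :=
    let ⟨i, ⟨hi, _⟩, hiI⟩ := hmeet v v (by rw [Set.inter_self]; exact D.cover v)
    ⟨⟨i, hiI⟩, hi⟩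
  edge_cover _ _ huv :=
    let ⟨i, hi, hiI⟩ := hmeet _ _ (D.edge_cover huv)
    ⟨⟨i, hiI⟩, hi⟩
  bag_conn v := by
    obtain ⟨i, ⟨hi, -⟩, hiI⟩ := hmeet v v (by rw [Set.inter_self]; exact D.cover v)
    have : Nonempty {x : I | v ∈ D.bag x} := ⟨⟨⟨i, hiI⟩, hi⟩⟩
    exact ⟨(D.acyclic.preconnected_induce_inter (D.preconnected_subtree v)
      hI.preconnected).induce_induce⟩

lemma exists_finite (D : TreeDecomp G) [Finite V] :
    ∃ D' : TreeDecomp G, Finite D'.ι ∧ ∀ i', ∃ i, D'.bag i' = D.bag i := by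
  classical
  -- a finite subtree through one node of each nonempty `subtree u ∩ subtree v` suffices
  let P : Set D.ι := Set.range fun p : {p : V × V // (D.subtree p.1 ∩ D.subtree p.2).Nonempty} =>
    p.2.some
  obtain ⟨I, hPI, hI⟩ := extend_finset_to_connected D.conn.preconnected
    (Finset.insert_nonempty D.conn.nonempty.some (Set.toFinite P).toFinset)
  refine ⟨D.restrict I hI fun u v h => ⟨_, ((⟨(u, v), h⟩ : {p : V × V // _}).2.some_mem), ?_⟩,
    show Finite (I : Set D.ι) from inferInstance, fun i' => ⟨i'.1, rfl⟩⟩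
  exact hPI (Finset.mem_insert_of_mem ((Set.toFinite P).mem_toFinset.2 ⟨⟨(u, v), h⟩, rfl⟩))

end TreeDecomp

lemma exists_treeDecomp_card_bag_le {V : Type} [Fintype V] (G : SimpleGraph V) :
    ∃ D : TreeDecomp G, ∀ i, (D.bag i).card ≤ treewidth G + 1 := by
  let D : TreeDecomp G :=
    { ι := Unit
      T := ⊥
      conn := IsTree.of_subsingleton.connected
      acyclic := isAcyclic_bot
      bag _ := Finset.univ
      cover _ := ⟨(), Finset.mem_univ _⟩
      edge_cover _ _ _ := ⟨(), Finset.mem_univ _, Finset.mem_univ _⟩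
      bag_conn v := by
        have : Nonempty {i : Unit | v ∈ (Finset.univ : Finset V)} := ⟨⟨(), Finset.mem_univ v⟩⟩
        exact IsTree.of_subsingleton.connected }
  exact Nat.sInf_mem (s := {k | ∃ D : TreeDecomp G, ∀ i, (D.bag i).card ≤ k + 1})
    ⟨Fintype.card V, D, fun _ => Finset.card_univ.trans_le (Nat.le_succ _)⟩

theorem nordhaus_gaddum_treewidth {V : Type} [Fintype V] (G : SimpleGraph V) :
    Fintype.card V - 2 ≤ treewidth G + treewidth Gᶜ := by
  classical
  obtain ⟨D₀, hD₀⟩ := exists_treeDecomp_card_bag_le G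
  obtain ⟨D, _, hD⟩ := D₀.exists_finite
  obtain ⟨D', hD'⟩ := exists_treeDecomp_card_bag_le Gᶜ
  obtain ⟨i, j, hij⟩ := exists_forall_mem_or_mem_of_pairwise_inter_nonempty D.isTree D'.isTree
    D.subtree D'.subtree D.preconnected_subtree D'.preconnected_subtree
    (D.subtree_inter_nonempty_or D')
  obtain ⟨i₀, hi₀⟩ := hD i
  have hcover : Finset.univ ⊆ D.bag i ∪ D'.bag j := fun v _ => Finset.mem_union.2 (hij v)
  have := (Finset.card_le_card hcover).trans (Finset.card_union_le _ _)
  rw [Finset.card_univ, hi₀] at this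
  have := hD₀ i₀
  have := hD' j
  omega
end

section
/- Let G be a graph with no induced 4-cycle. Then the collection B = { {v,w} : vw is an edge of the complement of G } is a bramble in the complement of G. -/
open SimpleGraph

lemma adj_of_not_touch_compl {V : Type} {G : SimpleGraph V} {A B : Set V}
    (h : ¬ Touch Gᶜ A B) {a b : V} (ha : a ∈ A) (hb : b ∈ B) : G.Adj a b := by
  by_contra hab
  have hne : a ≠ b := by
    rintro rfl
    exact h (Or.inl ⟨a, ha, hb⟩)
  exact h (Or.inr ⟨a, ha, b, hb, (compl_adj G a b).2 ⟨hne, hab⟩⟩)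

/-- If they did not touch, `{v, w}` and `{x, y}` would be the diagonals of the induced 4-cycle
`v x w y` in `G`. -/
lemma touch_compl_pair_of_not_hasInducedC4 {V : Type} {G : SimpleGraph V}
    (h4 : ¬ HasInducedC4 G) {v w x y : V} (hvw : Gᶜ.Adj v w) (hxy : Gᶜ.Adj x y) :
    Touch Gᶜ {v, w} {x, y} := by
  by_contra h
  have hG {a b : V} (ha : a ∈ ({v, w} : Set V)) (hb : b ∈ ({x, y} : Set V)) : G.Adj a b :=
    adj_of_not_touch_compl h ha hb
  exact h4 ⟨v, x, w, y, hvw.ne, hxy.ne, hG (by simp) (by simp), (hG (by simp) (by simp)).symm,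
    hG (by simp) (by simp), (hG (by simp) (by simp)).symm, hvw.2, hxy.2⟩

theorem bramble_of_no_inducedC4 {V : Type} (G : SimpleGraph V) (h4 : ¬ HasInducedC4 G) :
    IsBramble Gᶜ {S : Set V | ∃ v w : V, Gᶜ.Adj v w ∧ S = {v, w}} := by
  constructor
  · rintro A ⟨v, w, hvw, rfl⟩
    exact induce_pair_connected_of_adj hvw
  · rintro A ⟨v, w, hvw, rfl⟩ B ⟨x, y, hxy, rfl⟩
    exact touch_compl_pair_of_not_hasInducedC4 h4 hvw hxy
end

section
/- Every graph G on n vertices with girth at least 5 satisfies tw(complement of G) ≥ n - 3. -/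
open SimpleGraph

/-!
For girth at least 5, the edges of `Gᶜ`, viewed as two-element sets, form a bramble of `Gᶜ`:
two disjoint edges `pq`, `xy` of `Gᶜ` with no edge of `Gᶜ` between them would make `p x q y` a
4-cycle of `G`. A set hitting every edge of `Gᶜ` has a complement that is a clique of the
triangle-free graph `G`, so the bramble has order at least `n - 2`, and `tw(Gᶜ) ≥ n - 3` follows
from the easy half of treewidth duality: every tree decomposition has a bag hitting a given finite
bramble. For that, point each node whose bag misses some bramble element `A` towards the subtree of
nodes meeting `A`; some tree edge `ab` is then pointed at from both ends, and it separates two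
bramble elements, which therefore cannot touch.
-/

namespace SimpleGraph

section Girth

variable {V : Type*} {G : SimpleGraph V}

lemma egirth_le_three_of_adj {u v w : V} (huv : G.Adj u v) (hvw : G.Adj v w) (hwu : G.Adj w u) :
    G.egirth ≤ 3 := by
  have hc : (Walk.cons huv (Walk.cons hvw (Walk.cons hwu Walk.nil))).IsCycle := by
    simp [Walk.cons_isCycle_iff, Walk.cons_isPath_iff, huv.ne, hvw.ne, hwu.ne, hwu.ne.symm,
      huv.ne.symm]
  exact egirth_le_length hc

lemma egirth_le_four_of_adj {u x v y : V} (hux : G.Adj u x) (hxv : G.Adj x v) (hvy : G.Adj v y)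
    (hyu : G.Adj y u) (huv : u ≠ v) (hxy : x ≠ y) : G.egirth ≤ 4 := by
  have hc : (Walk.cons hux (Walk.cons hxv (Walk.cons hvy (Walk.cons hyu Walk.nil)))).IsCycle := by
    simp [Walk.cons_isCycle_iff, Walk.cons_isPath_iff, hux.ne, hxv.ne, hvy.ne, hyu.ne, huv, hxy,
      hux.ne.symm, hyu.ne.symm, huv.symm]
  exact egirth_le_length hc

lemma IsClique.card_le_two (hG : 3 < G.egirth) {s : Finset V} (hs : G.IsClique (s : Set V)) :
    s.card ≤ 2 := by
  by_contra! h
  obtain ⟨x, hx, y, hy, z, hz, hxy, hxz, hyz⟩ := Finset.two_lt_card.mp h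
  exact (egirth_le_three_of_adj (hs hx hy hxy) (hs hy hz hyz) (hs hz hx hxz.symm)).not_gt hG

lemma card_sub_two_le_of_isVertexCover_compl [Fintype V] [DecidableEq V] (hG : 3 < G.egirth)
    {S : Finset V} (hS : Gᶜ.IsVertexCover S) : Fintype.card V - 2 ≤ S.card := by
  have hclique : G.IsClique (Sᶜ : Finset V) := by
    rw [Finset.coe_compl]
    exact (isIndepSet_compl G).mp (isIndepSet_compl_iff_isVertexCover.mpr hS)
  have := hclique.card_le_two hG
  rw [Finset.card_compl] at this
  omega

end Girth

section Branch

variable {ι : Type*} {T : SimpleGraph ι} {a b c t : ι}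

def branch (T : SimpleGraph ι) (a b : ι) : Set ι :=
  {c | (T.deleteEdges {s(a, b)}).Reachable b c}

lemma mem_branch_iff : c ∈ T.branch a b ↔ ∃ p : T.Walk b c, s(a, b) ∉ p.edges :=
  reachable_deleteEdges_iff_exists_walk

lemma mem_branch_of_induce_preconnected {X : Set ι} (hX : (T.induce X).Preconnected) (ha : a ∉ X)
    (ht : t ∈ X) (hc : c ∈ X) (htb : t ∈ T.branch a b) : c ∈ T.branch a b := by
  let f : T.induce X →g T.deleteEdges {s(a, b)} :=
    { toFun := Subtype.val
      map_rel' := fun {x y} hxy => deleteEdges_adj.mpr ⟨hxy, fun h => by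
        rcases Sym2.eq_iff.mp h with ⟨rfl, -⟩ | ⟨-, rfl⟩
        exacts [ha x.2, ha y.2]⟩ }
  exact htb.trans ((hX ⟨t, ht⟩ ⟨c, hc⟩).map f)

lemma IsAcyclic.notMem_branch_of_mem_branch (hT : T.IsAcyclic) (hab : T.Adj a b)
    (hc : c ∈ T.branch a b) : c ∉ T.branch b a := fun hc' =>
  isAcyclic_iff_forall_adj_isBridge.mp hT hab <| by
    rw [branch, Set.mem_ofPred_eq, Sym2.eq_swap] at hc'
    exact hc'.trans hc.symm

lemma Connected.exists_adj_mem_branch (hT : T.Connected) (h : t ≠ a) :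
    ∃ b, T.Adj a b ∧ t ∈ T.branch a b := by
  obtain ⟨p, hp, -⟩ := hT.exists_path_of_dist a t
  have hnil : ¬ p.Nil := Walk.not_nil_of_ne h.symm
  rw [← p.cons_tail_eq hnil, Walk.cons_isPath_iff] at hp
  exact ⟨p.snd, p.adj_snd hnil,
    mem_branch_iff.mpr ⟨p.tail, fun he => hp.2 (p.tail.fst_mem_support_of_mem_edges he)⟩⟩

lemma IsAcyclic.dist_lt_of_mem_branch (hT : T.IsAcyclic) (hab : T.Adj a b)
    (hc : c ∈ T.branch a b) : T.dist b c < T.dist a c := by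
  classical
  obtain ⟨p, hp⟩ := (hab.reachable.trans (hc.mono (deleteEdges_le _))).exists_walk_length_eq_dist
  by_cases hb : b ∈ p.support
  · calc T.dist b c ≤ (p.dropUntil b hb).length := dist_le _
      _ < p.length := Walk.length_dropUntil_lt_length hb hab.ne'
      _ = T.dist a c := hp
  · exact absurd (mem_branch_iff.mpr ⟨p, fun he => hb (p.fst_mem_support_of_mem_edges he)⟩)
      (hT.notMem_branch_of_mem_branch hab hc)

lemma IsAcyclic.branch_subset_branch (hT : T.IsAcyclic) (hab : T.Adj a b) (hbc : T.Adj b c)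
    (hca : c ≠ a) : T.branch b c ⊆ T.branch a b := by
  classical
  intro x hx
  obtain ⟨w, hw⟩ := mem_branch_iff.mp hx
  have hb : b ∉ w.support := fun hb => hT.notMem_branch_of_mem_branch hbc
    (mem_branch_iff.mpr ⟨w.takeUntil b hb, fun he => hw (w.edges_takeUntil_subset_edges hb he)⟩)
    (Reachable.refl b)
  have hbc' : (T.deleteEdges {s(a, b)}).Adj b c := deleteEdges_adj.mpr ⟨hbc, by
    simp [hab.ne.symm, hca]⟩
  exact hbc'.reachable.trans (reachable_deleteEdges_iff_exists_walk.mpr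
    ⟨w, fun he => hb (w.snd_mem_support_of_mem_edges he)⟩)

lemma IsAcyclic.lt_dist_of_mem_branch (hT : T.IsAcyclic) {i : ℕ → ι}
    (hadj : ∀ k, T.Adj (i k) (i (k + 1))) (hback : ∀ k, i (k + 2) ≠ i k) {m : ℕ} {x : ι}
    (hx : x ∈ T.branch (i m) (i (m + 1))) : m < T.dist (i 0) x := by
  suffices key : ∀ m, ∀ x ∈ T.branch (i m) (i (m + 1)), T.dist (i (m + 1)) x + m < T.dist (i 0) x by
    have := key m x hx
    omega
  intro m
  induction m with
  | zero => exact fun x hx => hT.dist_lt_of_mem_branch (hadj 0) hx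
  | succ m ih =>
    intro x hx
    have h₁ := ih x (hT.branch_subset_branch (hadj m) (hadj (m + 1)) (hback m) hx)
    have h₂ := hT.dist_lt_of_mem_branch (hadj (m + 1)) hx
    omega

/-- The tree may be infinite, so edges cannot simply be counted. If no edge were pointed at from
both ends, stepping from each node towards its target would give a non-backtracking walk moving
ever farther from its start, while the finitely many targets lie at bounded distance from it. -/
lemma IsTree.exists_adj_mem_branch_mem_branch (hT : T.IsTree) {tgt : ι → ι}
    (hfin : (Set.range tgt).Finite) (hne : ∀ a, tgt a ≠ a) :
    ∃ a b, T.Adj a b ∧ tgt a ∈ T.branch a b ∧ tgt b ∈ T.branch b a := by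
  by_contra! hno
  choose step hstep using fun a => hT.connected.exists_adj_mem_branch (hne a)
  let i : ℕ → ι := fun m => step^[m] hT.connected.nonempty.some
  have hsucc : ∀ m, i (m + 1) = step (i m) := fun m => Function.iterate_succ_apply' _ _ _
  have hadj : ∀ m, T.Adj (i m) (i (m + 1)) := fun m => hsucc m ▸ (hstep (i m)).1
  have hback : ∀ m, i (m + 2) ≠ i m := fun m h => by
    refine hno (i m) (i (m + 1)) (hadj m) (hsucc m ▸ (hstep (i m)).2) ?_
    simpa [← hsucc, h] using (hstep (i (m + 1))).2
  obtain ⟨N, hN⟩ := (hfin.image (T.dist (i 0))).bddAbove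
  have hlt := hT.isAcyclic.lt_dist_of_mem_branch hadj hback (m := N)
    (hsucc N ▸ (hstep (i N)).2)
  exact hlt.not_ge (hN (Set.mem_image_of_mem _ (Set.mem_range_self _)))

end Branch

end SimpleGraph

namespace TreeDecomp

variable {V : Type} {H : SimpleGraph V} (D : TreeDecomp H)

def nodesMeeting (A : Set V) : Set D.ι := {i | ∃ v ∈ A, v ∈ D.bag i}

lemma preconnected_nodesMeeting {A : Set V} (hA : (H.induce A).Preconnected) :
    (D.T.induce (D.nodesMeeting A)).Preconnected := by
  have within : ∀ (v : A) i j (hi : v.1 ∈ D.bag i) (hj : v.1 ∈ D.bag j),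
      (D.T.induce (D.nodesMeeting A)).Reachable ⟨i, v, v.2, hi⟩ ⟨j, v, v.2, hj⟩ :=
    fun v i j hi hj => ((D.bag_conn v).preconnected ⟨i, hi⟩ ⟨j, hj⟩).map
      (induceHomOfLE D.T (fun _ hk => ⟨v, v.2, hk⟩ : {i | v.1 ∈ D.bag i} ⊆ D.nodesMeeting A)).toHom
  have along : ∀ (x y : A) (_ : (H.induce A).Walk x y) i j (hi : x.1 ∈ D.bag i)
      (hj : y.1 ∈ D.bag j),
      (D.T.induce (D.nodesMeeting A)).Reachable ⟨i, x, x.2, hi⟩ ⟨j, y, y.2, hj⟩ := by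
    intro x y p
    induction p with
    | nil => exact fun i j hi hj => within _ i j hi hj
    | cons hxy _ ih =>
      intro i j hi hj
      obtain ⟨k, hxk, hyk⟩ := D.edge_cover hxy
      exact (within _ i k hi hxk).trans (ih k j hyk hj)
  rintro ⟨i, v, hv, hi⟩ ⟨j, w, hw, hj⟩
  exact along ⟨v, hv⟩ ⟨w, hw⟩ (hA _ _).some i j hi hj

theorem exists_bag_isHittingSet {𝓑 : Set (Set V)} (h𝓑 : IsBramble H 𝓑) (hfin : 𝓑.Finite) :
    ∃ i, IsHittingSet 𝓑 (D.bag i : Set V) := by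
  by_contra! h
  simp only [IsHittingSet, not_forall, exists_prop] at h
  choose A hA hmiss using h
  have hout : ∀ i, i ∉ D.nodesMeeting (A i) := fun i ⟨v, hv, hvi⟩ => hmiss i ⟨v, hv, hvi⟩
  have hmeet : ∀ B ∈ 𝓑, ∃ j, j ∈ D.nodesMeeting B := fun B hB => by
    obtain ⟨v, hv⟩ := (h𝓑.1 B hB).nonempty
    obtain ⟨j, hj⟩ := D.cover v
    exact ⟨j, v, hv, hj⟩
  have := D.conn.nonempty
  choose! node hnode using hmeet
  obtain ⟨a, b, hab, ha, hb⟩ := IsTree.exists_adj_mem_branch_mem_branch ⟨D.conn, D.acyclic⟩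
    (tgt := fun i => node (A i))
    ((hfin.image node).subset (by rintro _ ⟨i, rfl⟩; exact ⟨A i, hA i, rfl⟩))
    (fun i h => hout i (by simpa only [h] using hnode _ (hA i)))
  have side : ∀ {c d}, node (A c) ∈ D.T.branch c d → ∀ j ∈ D.nodesMeeting (A c),
      j ∈ D.T.branch c d := fun {c _} ht j hj =>
    mem_branch_of_induce_preconnected
      (D.preconnected_nodesMeeting (h𝓑.1 _ (hA c)).preconnected) (hout c) (hnode _ (hA c)) hj ht
  have hsep : ∀ j, j ∈ D.nodesMeeting (A a) → j ∉ D.nodesMeeting (A b) := fun j hja hjb =>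
    D.acyclic.notMem_branch_of_mem_branch hab (side ha j hja) (side hb j hjb)
  rcases h𝓑.2 _ (hA a) _ (hA b) with ⟨v, hva, hvb⟩ | ⟨v, hva, w, hwb, hvw⟩
  · obtain ⟨j, hj⟩ := D.cover v
    exact hsep j ⟨v, hva, hj⟩ ⟨v, hvb, hj⟩
  · obtain ⟨j, hvj, hwj⟩ := D.edge_cover hvw
    exact hsep j ⟨v, hva, hvj⟩ ⟨w, hwb, hwj⟩

def single [Fintype V] (H : SimpleGraph V) : TreeDecomp H where
  ι := Unit
  T := ⊥
  conn := IsTree.of_subsingleton.connected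
  acyclic := IsAcyclic.of_subsingleton
  bag _ := Finset.univ
  cover v := ⟨(), Finset.mem_univ v⟩
  edge_cover u v _ := ⟨(), Finset.mem_univ u, Finset.mem_univ v⟩
  bag_conn v :=
    { preconnected := fun ⟨(), _⟩ ⟨(), _⟩ => .rfl
      nonempty := ⟨⟨(), Finset.mem_univ v⟩⟩ }

end TreeDecomp

theorem le_treewidth_of_isBramble {V : Type} [Fintype V] {H : SimpleGraph V} {𝓑 : Set (Set V)}
    (h𝓑 : IsBramble H 𝓑) {m : ℕ} (hm : ∀ S : Finset V, IsHittingSet 𝓑 S → m ≤ S.card) :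
    m - 1 ≤ treewidth H := by
  refine le_csInf ⟨Fintype.card V, TreeDecomp.single H, fun _ => Nat.le_succ_of_le
    (Finset.card_le_univ _)⟩ ?_
  rintro k ⟨D, hD⟩
  obtain ⟨i, hi⟩ := D.exists_bag_isHittingSet h𝓑 (Set.toFinite 𝓑)
  have := hm _ hi
  have := hD i
  omega

lemma isBramble_compl_edges {V : Type} {G : SimpleGraph V} (hG : 4 < G.egirth) :
    IsBramble Gᶜ {A | ∃ p q, Gᶜ.Adj p q ∧ A = {p, q}} := by
  refine ⟨?_, ?_⟩
  · rintro _ ⟨p, q, hpq, rfl⟩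
    exact induce_pair_connected_of_adj hpq
  · rintro _ ⟨p, q, hpq, rfl⟩ _ ⟨x, y, hxy, rfl⟩
    by_contra h
    have hcross : ∀ u ∈ ({p, q} : Set V), ∀ v ∈ ({x, y} : Set V), G.Adj u v := by
      intro u hu v hv
      by_contra huv
      have hne : u ≠ v := fun he => h (Or.inl ⟨u, hu, he ▸ hv⟩)
      exact h (Or.inr ⟨u, hu, v, hv, (compl_adj G u v).mpr ⟨hne, huv⟩⟩)
    simp only [Set.mem_insert_iff, Set.mem_singleton_iff, forall_eq_or_imp, forall_eq] at hcross
    exact (egirth_le_four_of_adj hcross.1.1 hcross.2.1.symm hcross.2.2 hcross.1.2.symm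
      hpq.ne hxy.ne).not_gt hG

theorem tw_compl_of_girth_ge_five {V : Type} [Fintype V] (G : SimpleGraph V)
    (hg : 5 ≤ G.girth) : Fintype.card V - 3 ≤ treewidth Gᶜ := by
  classical
  -- `girth` is `0` on acyclic graphs, so `hg` forces a finite `egirth`.
  have hG : 4 < G.egirth := lt_of_not_ge fun h => by
    have := ENat.toNat_le_of_le_natCast (n := 4) h
    simp only [girth] at hg
    omega
  have hcover : ∀ S : Finset V, IsHittingSet {A | ∃ p q, Gᶜ.Adj p q ∧ A = {p, q}} S →
      Gᶜ.IsVertexCover S := fun S hS p q hpq => by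
    obtain ⟨v, hv, hvS⟩ := hS _ ⟨p, q, hpq, rfl⟩
    rcases hv with rfl | rfl
    exacts [Or.inl hvS, Or.inr hvS]
  have := le_treewidth_of_isBramble (isBramble_compl_edges hG) (m := Fintype.card V - 2)
    fun S hS => card_sub_two_le_of_isVertexCover_compl (lt_trans (by norm_num) hG) (hcover S hS)
  omega
end
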